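/- arXiv:1910.01925 — 5 statements merged into one kernel-verified Lean document; each statement's English description precedes it below -/
import Mathlib

section
/- The function f_n(κ) = 2 sin(πn/2) − κ sin(πn/κ) is nonnegative for all κ in [1,2] and all n in [0,1]. -/
open Real

theorem f_n_nonneg (n κ : ℝ) (hn : n ∈ Set.Icc (0:ℝ) 1) (hκ : κ ∈ Set.Icc (1:ℝ) 2) :
    0 ≤ 2 * Real.sin (π * n / 2) - κ * Real.sin (π * n / κ) := by
  obtain ⟨hn0, hn1⟩ := hn
  obtain ⟨hκ1, hκ2⟩ := hκ
  have hκ0 : (0:ℝ) < κ := lt_of_lt_of_le one_pos hκ1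
  have hπ := Real.pi_pos
  have hy0 : (0:ℝ) ≤ π * n / κ := by positivity
  have hyπ : π * n / κ ≤ π := by
    rw [div_le_iff₀ hκ0]
    nlinarith
  have hconc := strictConcaveOn_sin_Icc.concaveOn
  have h := hconc.2 (Set.mem_Icc.2 ⟨le_refl 0, le_of_lt hπ⟩) (Set.mem_Icc.2 ⟨hy0, hyπ⟩)
      (show (0:ℝ) ≤ 1 - κ/2 by linarith) (show (0:ℝ) ≤ κ/2 by linarith)
      (show (1 - κ/2) + κ/2 = 1 by ring)
  simp only [smul_eq_mul, mul_zero, zero_add, Real.sin_zero] at h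
  have hpt : κ/2 * (π * n / κ) = π * n / 2 := by
    field_simp
  rw [hpt] at h
  nlinarith [h]
end

section
/- For every r ≥ 0, (2/√π)·e^{−r²}/(r + √(r² + 2)) ≤ erfc(r) ≤ (2/√π)·e^{−r²}/(r + √(r² + 4/π)). -/
open Real MeasureTheory Set Filter Topology

/-!
Write `I(x) = ∫_x^∞ e^{-t²} dt` and `φ_c(x) = e^{-x²} / (x + √(x² + c))`. Both tend to `0` at
`+∞`, and a direct computation gives
`(I - φ_c)'(x) = e^{-x²} (1 - c + x / √(x² + c)) / (x + √(x² + c))²`.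
For `c ≥ 2` the bracket is nonpositive, so `I - φ_c` decreases to `0` and is nonnegative.
For `c ≤ 4/π` the bracket is increasing on `[0, ∞)`, so `I - φ_c` first decreases and then
increases; since `(I - φ_c)(0) = √π/2 - 1/√c ≤ 0` and the limit at `+∞` is `0`, it stays `≤ 0`.
-/

/-- The complementary error function `erfc r = (2/√π) ∫_r^∞ e^{-t²} dt`. -/
noncomputable def erfc (r : ℝ) : ℝ :=
  (2 / Real.sqrt π) * ∫ t in Set.Ioi r, Real.exp (-t ^ 2)

theorem hasDerivAt_integral_Ioi {f : ℝ → ℝ} (hfi : Integrable f) (hfc : Continuous f) (x : ℝ) :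
    HasDerivAt (fun y => ∫ t in Ioi y, f t) (-f x) x := by
  have hsplit : (fun y => ∫ t in Ioi y, f t) = fun y => (∫ t in Ioi 0, f t) - ∫ t in 0..y, f t :=
    funext fun y => by
      rw [← intervalIntegral.integral_Ioi_sub_Ioi' hfi.integrableOn hfi.integrableOn, sub_sub_cancel]
  rw [hsplit]
  exact (intervalIntegral.integral_hasDerivAt_right hfi.intervalIntegrable
    hfc.stronglyMeasurable.stronglyMeasurableAtFilter hfc.continuousAt).const_sub _

theorem nonpos_of_hasDerivAt_mul_monotoneOn {f w k : ℝ → ℝ} {a r : ℝ}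
    (hf : ∀ x, HasDerivAt f (w x * k x) x) (hw : ∀ x, 0 ≤ w x) (hk : MonotoneOn k (Ici a))
    (ha : f a ≤ 0) (hlim : Tendsto f atTop (𝓝 0)) (hr : a ≤ r) : f r ≤ 0 := by
  have hcont : Continuous f := continuous_iff_continuousAt.2 fun x => (hf x).continuousAt
  rcases le_or_gt (k r) 0 with hkr | hkr
  · have hanti : AntitoneOn f (Icc a r) := by
      refine antitoneOn_of_hasDerivWithinAt_nonpos (convex_Icc a r) hcont.continuousOn
        (fun x _ => (hf x).hasDerivWithinAt) fun x hx => ?_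
      rw [interior_Icc] at hx
      exact mul_nonpos_of_nonneg_of_nonpos (hw x)
        ((hk (le_of_lt hx.1) hr hx.2.le).trans hkr)
    exact (hanti (left_mem_Icc.2 hr) (right_mem_Icc.2 hr) hr).trans ha
  · have hmono : MonotoneOn f (Ici r) := by
      refine monotoneOn_of_hasDerivWithinAt_nonneg (convex_Ici r) hcont.continuousOn
        (fun x _ => (hf x).hasDerivWithinAt) fun x hx => ?_
      rw [interior_Ici] at hx
      exact mul_nonneg (hw x) (hkr.le.trans (hk hr (hr.trans hx.le) hx.le))
    refine ge_of_tendsto hlim ?_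
    filter_upwards [eventually_ge_atTop r] with y hy
    exact hmono self_mem_Ici hy hy

theorem monotoneOn_div_sqrt_sq_add {c : ℝ} (hc : 0 < c) :
    MonotoneOn (fun x => x / √(x ^ 2 + c)) (Ici 0) := by
  intro a (ha : 0 ≤ a) b (hb : 0 ≤ b) hab
  rw [div_le_div_iff₀ (by positivity) (by positivity), ← sqrt_sq ha, ← sqrt_sq hb,
    ← sqrt_mul (by positivity), ← sqrt_mul (by positivity), sqrt_sq ha, sqrt_sq hb]
  refine sqrt_le_sqrt ?_
  nlinarith [mul_le_mul_of_nonneg_left (pow_le_pow_left₀ ha hab 2) hc.le]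

noncomputable def gaussTailBound (c x : ℝ) : ℝ := exp (-x ^ 2) / (x + √(x ^ 2 + c))

section gaussTailBound

variable {c : ℝ}

theorem add_sqrt_sq_add_pos (hc : 0 < c) (x : ℝ) : 0 < x + √(x ^ 2 + c) := by
  have : -x < √(x ^ 2 + c) := lt_sqrt_of_sq_lt (by linarith)
  linarith

theorem hasDerivAt_gaussTailBound (hc : 0 < c) (x : ℝ) :
    HasDerivAt (gaussTailBound c)
      (-exp (-x ^ 2) - exp (-x ^ 2) / (x + √(x ^ 2 + c)) ^ 2 * (1 - c + x / √(x ^ 2 + c))) x := by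
  have hs2 : √(x ^ 2 + c) ^ 2 = x ^ 2 + c := sq_sqrt (by positivity)
  have hden := add_sqrt_sq_add_pos hc x
  have hexp : HasDerivAt (fun y => exp (-y ^ 2)) (exp (-x ^ 2) * -(2 * x)) x := by
    simpa using ((hasDerivAt_pow 2 x).neg).exp
  have hsqrt : HasDerivAt (fun y => √(y ^ 2 + c)) ((2 * x) / (2 * √(x ^ 2 + c))) x := by
    simpa using ((hasDerivAt_pow 2 x).add_const c).sqrt (by positivity)
  refine (hexp.div ((hasDerivAt_id' x).fun_add hsqrt) hden.ne').congr_deriv ?_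
  field_simp
  linear_combination √(x ^ 2 + c) * hs2

theorem tendsto_gaussTailBound_atTop : Tendsto (gaussTailBound c) atTop (𝓝 0) := by
  have hexp : Tendsto (fun x : ℝ => exp (-x ^ 2)) atTop (𝓝 0) :=
    tendsto_exp_atBot.comp (tendsto_neg_atTop_atBot.comp (tendsto_pow_atTop two_ne_zero))
  refine hexp.div_atTop (tendsto_atTop_mono (fun x => ?_) tendsto_id)
  simp only [id, le_add_iff_nonneg_right, sqrt_nonneg]

theorem hasDerivAt_integral_Ioi_sub_gaussTailBound (hc : 0 < c) (x : ℝ) :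
    HasDerivAt (fun y => (∫ t in Ioi y, exp (-t ^ 2)) - gaussTailBound c y)
      (exp (-x ^ 2) / (x + √(x ^ 2 + c)) ^ 2 * (1 - c + x / √(x ^ 2 + c))) x := by
  have hI := hasDerivAt_integral_Ioi (by simpa using integrable_exp_neg_mul_sq one_pos)
    (by fun_prop) x
  exact (hI.fun_sub (hasDerivAt_gaussTailBound hc x)).congr_deriv (by ring)

theorem tendsto_integral_Ioi_sub_gaussTailBound :
    Tendsto (fun y => (∫ t in Ioi y, exp (-t ^ 2)) - gaussTailBound c y) atTop (𝓝 0) := by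
  simpa using (tendsto_integral_Ioi_zero tendsto_id).sub tendsto_gaussTailBound_atTop

theorem gaussTailBound_le_integral_Ioi (hc : 2 ≤ c) (x : ℝ) :
    gaussTailBound c x ≤ ∫ t in Ioi x, exp (-t ^ 2) := by
  have hc0 : 0 < c := by linarith
  have hanti := antitone_of_hasDerivAt_nonpos (hasDerivAt_integral_Ioi_sub_gaussTailBound hc0)
    fun y => by
      have : y / √(y ^ 2 + c) ≤ 1 :=
        div_le_one_of_le₀ (le_sqrt_of_sq_le (by linarith)) (sqrt_nonneg _)
      exact mul_nonpos_of_nonneg_of_nonpos (by positivity) (by linarith)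
  exact sub_nonneg.1 (hanti.le_of_tendsto tendsto_integral_Ioi_sub_gaussTailBound x)

theorem integral_Ioi_le_gaussTailBound (hc0 : 0 < c) (hc : c ≤ 4 / π) {x : ℝ} (hx : 0 ≤ x) :
    ∫ t in Ioi x, exp (-t ^ 2) ≤ gaussTailBound c x := by
  have hzero : (∫ t in Ioi 0, exp (-t ^ 2)) - gaussTailBound c 0 ≤ 0 := by
    have hI : ∫ t in Ioi (0 : ℝ), exp (-t ^ 2) = √π / 2 := by
      simpa using integral_gaussian_Ioi 1
    have hcπ : √c * √π ≤ 2 := by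
      rw [← sqrt_mul hc0.le, show (2 : ℝ) = √(2 ^ 2) by simp]
      exact sqrt_le_sqrt (by rw [le_div_iff₀ pi_pos] at hc; linarith)
    have : 0 < √c := sqrt_pos.2 hc0
    rw [hI, gaussTailBound, sub_nonpos, div_le_div_iff₀ two_pos (by simpa)]
    simpa [mul_comm] using hcπ
  refine sub_nonpos.1 (nonpos_of_hasDerivAt_mul_monotoneOn
    (f := fun y => (∫ t in Ioi y, exp (-t ^ 2)) - gaussTailBound c y)
    (hasDerivAt_integral_Ioi_sub_gaussTailBound hc0) (fun y => by positivity) ?_ hzero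
    tendsto_integral_Ioi_sub_gaussTailBound hx)
  exact fun a ha b hb hab => by
    simpa using monotoneOn_div_sqrt_sq_add hc0 ha hb hab

end gaussTailBound

theorem erfc_bounds (r : ℝ) (hr : 0 ≤ r) :
    (2 / Real.sqrt π) * Real.exp (-r ^ 2) / (r + Real.sqrt (r ^ 2 + 2)) ≤ erfc r ∧
    erfc r ≤ (2 / Real.sqrt π) * Real.exp (-r ^ 2) / (r + Real.sqrt (r ^ 2 + 4 / π)) := by
  have hcoef : 0 ≤ 2 / √π := by positivity
  rw [erfc, mul_div_assoc, mul_div_assoc]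
  exact ⟨mul_le_mul_of_nonneg_left (gaussTailBound_le_integral_Ioi le_rfl r) hcoef,
    mul_le_mul_of_nonneg_left (integral_Ioi_le_gaussTailBound (by positivity) le_rfl hr) hcoef⟩
end

section
/- The regularized Coulomb potential v_β(r) = (√π/(2β)) e^{r²/(4β²)} erfc(r/(2β)) satisfies v_β(γ) ≤ 2/γ for every γ > 0 and every β > 0. -/
open Real MeasureTheory

/-- The regularized Coulomb potential with cutoff parameter `β`. -/
noncomputable def vReg (β r : ℝ) : ℝ :=
  (Real.sqrt π / (2 * β)) * Real.exp (r ^ 2 / (4 * β ^ 2)) * erfc (r / (2 * β))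

lemma integral_exp_neg_mul_Ioi' {x : ℝ} (hx : 0 < x) :
    ∫ t in Set.Ioi x, Real.exp (-(2 * x) * t) = Real.exp (-(2 * x) * x) / (2 * x) := by
  have h2x : (0:ℝ) < 2 * x := by linarith
  have hd : ∀ t ∈ Set.Ici x,
      HasDerivAt (fun t => -Real.exp (-(2 * x) * t) / (2 * x)) (Real.exp (-(2 * x) * t)) t := by
    intro t _
    have h : HasDerivAt (fun t => Real.exp (-(2 * x) * t))
        (Real.exp (-(2 * x) * t) * (-(2 * x))) t :=
      by simpa using ((hasDerivAt_id t).const_mul (-(2 * x))).exp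
    refine (h.neg.div_const (2 * x)).congr_deriv ?_
    rw [div_eq_iff h2x.ne']; ring
  have htend : Filter.Tendsto (fun t => -Real.exp (-(2 * x) * t) / (2 * x))
      Filter.atTop (nhds 0) := by
    have h0 : Filter.Tendsto (fun t : ℝ => -(2 * x) * t) Filter.atTop Filter.atBot :=
      (Filter.tendsto_const_mul_atBot_of_neg (by linarith)).2 Filter.tendsto_id
    have := (Real.tendsto_exp_atBot.comp h0).neg.div_const (2 * x)
    simpa using this
  have := MeasureTheory.integral_Ioi_of_hasDerivAt_of_tendsto' hd
    (exp_neg_integrableOn_Ioi x h2x) htend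
  rw [this]; ring

lemma gauss_tail (x : ℝ) (hx : 0 < x) :
    ∫ t in Set.Ioi x, Real.exp (-t ^ 2) ≤ Real.exp (-x ^ 2) / (2 * x) := by
  have h2x : (0:ℝ) < 2 * x := by linarith
  have hint1 : MeasureTheory.IntegrableOn (fun t => Real.exp (-t ^ 2)) (Set.Ioi x) := by
    have := integrable_exp_neg_mul_sq (b := 1) one_pos
    simpa using this.integrableOn
  have hint2 : MeasureTheory.IntegrableOn
      (fun t => Real.exp (x ^ 2) * Real.exp (-(2 * x) * t)) (Set.Ioi x) :=
    (exp_neg_integrableOn_Ioi x h2x).const_mul _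
  have hmono : ∫ t in Set.Ioi x, Real.exp (-t ^ 2)
      ≤ ∫ t in Set.Ioi x, Real.exp (x ^ 2) * Real.exp (-(2 * x) * t) := by
    refine MeasureTheory.setIntegral_mono_on hint1 hint2 measurableSet_Ioi fun t ht => ?_
    rw [← Real.exp_add]
    apply Real.exp_le_exp.2
    nlinarith [sq_nonneg (t - x)]
  have hee : Real.exp (x ^ 2) * Real.exp (-(2 * x) * x) = Real.exp (-x ^ 2) := by
    rw [← Real.exp_add]; congr 1; ring
  calc ∫ t in Set.Ioi x, Real.exp (-t ^ 2)
      ≤ ∫ t in Set.Ioi x, Real.exp (x ^ 2) * Real.exp (-(2 * x) * t) := hmono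
    _ = Real.exp (x ^ 2) * (Real.exp (-(2 * x) * x) / (2 * x)) := by
        rw [MeasureTheory.integral_const_mul, integral_exp_neg_mul_Ioi' hx]
    _ = Real.exp (-x ^ 2) / (2 * x) := by rw [← mul_div_assoc, hee]

theorem vReg_le_two_div (β γ : ℝ) (hβ : 0 < β) (hγ : 0 < γ) :
    vReg β γ ≤ 2 / γ := by
  set x := γ / (2 * β) with hxdef
  have hx : 0 < x := div_pos hγ (by linarith)
  have hπ : (0:ℝ) < Real.sqrt π := Real.sqrt_pos.2 Real.pi_pos
  have htail := gauss_tail x hx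
  have hx2 : x ^ 2 = γ ^ 2 / (4 * β ^ 2) := by
    rw [hxdef]; field_simp; ring
  have h1 : vReg β γ ≤ (Real.sqrt π / (2 * β)) * Real.exp (x ^ 2) *
      ((2 / Real.sqrt π) * (Real.exp (-x ^ 2) / (2 * x))) := by
    rw [vReg, erfc, ← hxdef, ← hx2]
    apply mul_le_mul_of_nonneg_left
    · exact mul_le_mul_of_nonneg_left htail (by positivity)
    · positivity
  have hee : Real.exp (x ^ 2) * Real.exp (-x ^ 2) = 1 := by
    rw [← Real.exp_add]; simp
  have h2 : (Real.sqrt π / (2 * β)) * Real.exp (x ^ 2) *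
      ((2 / Real.sqrt π) * (Real.exp (-x ^ 2) / (2 * x)))
      = (Real.exp (x ^ 2) * Real.exp (-x ^ 2)) * (1 / (2 * β * x)) := by
    field_simp
  have h3 : 2 * β * x = γ := by rw [hxdef]; field_simp
  calc vReg β γ ≤ _ := h1
    _ = (Real.exp (x ^ 2) * Real.exp (-x ^ 2)) * (1 / (2 * β * x)) := h2
    _ = 1 / γ := by rw [hee, h3, one_mul]
    _ ≤ 2 / γ := by
        gcongr; norm_num
end

section
/- For the regularized Coulomb potential v_β with β > 0 and any γ > 0, one has −γ v_β'(γ) + v_β(γ) ≤ 4/γ, i.e., ∫_γ^∞ v_β''(r) r dr ≤ 4/γ. -/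
open Real MeasureTheory

open Set

lemma int_gauss : Integrable (fun t : ℝ => Real.exp (-t^2)) := by
  have := integrable_exp_neg_mul_sq (b := 1) one_pos
  simpa using this

lemma int_mul_gauss : Integrable (fun t : ℝ => t * Real.exp (-t^2)) := by
  have := integrable_mul_exp_neg_mul_sq (b := 1) one_pos
  simpa using this

lemma tendsto_gauss : Filter.Tendsto (fun t : ℝ => Real.exp (-t^2)) Filter.atTop (nhds 0) := by
  have h : Filter.Tendsto (fun t : ℝ => -t^2) Filter.atTop Filter.atBot := by
    apply Filter.tendsto_neg_atBot_iff.mpr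
    exact Filter.tendsto_pow_atTop (by norm_num)
  exact Real.tendsto_exp_atBot.comp h

lemma int_mul_gauss_Ioi (x : ℝ) :
    ∫ t in Ioi x, t * Real.exp (-t^2) = Real.exp (-x^2) / 2 := by
  have hderiv : ∀ t ∈ Ici x, HasDerivAt (fun t : ℝ => -Real.exp (-t^2) / 2)
      (t * Real.exp (-t^2)) t := by
    intro t _
    have h1 : HasDerivAt (fun t : ℝ => -t^2) (-(2*t)) t := by
      simpa using ((hasDerivAt_pow 2 t).fun_neg)
    have h2 := (h1.exp).fun_neg.div_const 2
    refine h2.congr_deriv ?_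
    ring
  have htend : Filter.Tendsto (fun t : ℝ => -Real.exp (-t^2) / 2) Filter.atTop (nhds 0) := by
    simpa using (tendsto_gauss.neg.div_const 2)
  have := integral_Ioi_of_hasDerivAt_of_tendsto' hderiv
    (int_mul_gauss.integrableOn) htend
  rw [this]; ring

lemma gauss_Ioi_upper {x : ℝ} (hx : 0 < x) :
    ∫ t in Ioi x, Real.exp (-t^2) ≤ Real.exp (-x^2) / (2 * x) := by
  have hmono : ∫ t in Ioi x, Real.exp (-t^2) ≤ ∫ t in Ioi x, (t / x) * Real.exp (-t^2) := by
    apply setIntegral_mono_on int_gauss.integrableOn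
    · exact ((int_mul_gauss.div_const x).congr (by
        filter_upwards with t using by ring)).integrableOn
    · exact measurableSet_Ioi
    · intro t ht
      have h1 : (1 : ℝ) ≤ t / x := (le_div_iff₀ hx).mpr (by simpa using le_of_lt ht)
      nlinarith [Real.exp_pos (-t^2), h1]
  calc ∫ t in Ioi x, Real.exp (-t^2) ≤ ∫ t in Ioi x, (t / x) * Real.exp (-t^2) := hmono
    _ = (1/x) * ∫ t in Ioi x, t * Real.exp (-t^2) := by
        rw [← integral_const_mul]; congr 1; ext t; ring
    _ = Real.exp (-x^2) / (2 * x) := by rw [int_mul_gauss_Ioi]; field_simp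

noncomputable def Gf (t : ℝ) : ℝ := Real.exp (-t^2) * ((2*t^2+1)^2 - 2) / (2*t^2+1)^2

lemma Gf_hasDeriv (t : ℝ) :
    HasDerivAt (fun t : ℝ => t * Real.exp (-t^2) / (2*t^2+1)) (-Gf t) t := by
  have h1 : HasDerivAt (fun t : ℝ => -t^2) (-(2*t)) t := by
    simpa using ((hasDerivAt_pow 2 t).fun_neg)
  have hnum : HasDerivAt (fun t : ℝ => t * Real.exp (-t^2))
      (1 * Real.exp (-t^2) + t * (Real.exp (-t^2) * -(2*t))) t :=
    (hasDerivAt_id t).mul h1.exp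
  have hden : HasDerivAt (fun t : ℝ => 2*t^2+1) (2*(2*t)) t := by
    simpa using ((hasDerivAt_pow 2 t).const_mul 2).add_const 1
  have hd : (2*t^2+1 : ℝ) ≠ 0 := by positivity
  have := hnum.div hden hd
  refine this.congr_deriv ?_
  unfold Gf
  field_simp
  ring

lemma Gf_abs_le (t : ℝ) : |Gf t| ≤ Real.exp (-t^2) := by
  unfold Gf
  rw [abs_div, abs_mul, abs_of_pos (Real.exp_pos _),
    abs_of_pos (by positivity : (0:ℝ) < (2*t^2+1)^2)]
  rw [div_le_iff₀ (by positivity)]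
  have h1 : (1:ℝ) ≤ (2*t^2+1)^2 := by nlinarith [sq_nonneg t]
  have h2 : |(2*t^2+1)^2 - 2| ≤ (2*t^2+1)^2 := by
    rw [abs_le]; constructor <;> nlinarith
  nlinarith [Real.exp_pos (-t^2), abs_nonneg ((2*t^2+1)^2 - 2)]

lemma int_Gf : Integrable Gf := by
  apply Integrable.mono int_gauss
  · apply Continuous.aestronglyMeasurable
    apply Continuous.div
    · continuity
    · continuity
    · intro t; positivity
  · filter_upwards with t
    rw [Real.norm_eq_abs, Real.norm_eq_abs, abs_of_pos (Real.exp_pos _)]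
    exact Gf_abs_le t

lemma gauss_Ioi_lower (x : ℝ) :
    x * Real.exp (-x^2) / (2*x^2+1) ≤ ∫ t in Ioi x, Real.exp (-t^2) := by
  have htendF : Filter.Tendsto (fun t : ℝ => t * Real.exp (-t^2) / (2*t^2+1))
      Filter.atTop (nhds 0) := by
    apply tendsto_of_tendsto_of_tendsto_of_le_of_le' (tendsto_const_nhds) tendsto_gauss
    · filter_upwards [Filter.eventually_ge_atTop (0:ℝ)] with t ht
      positivity
    · filter_upwards [Filter.eventually_ge_atTop (0:ℝ)] with t ht
      rw [div_le_iff₀ (by positivity)]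
      nlinarith [Real.exp_pos (-t^2), sq_nonneg (2*t-1)]
  have key := integral_Ioi_of_hasDerivAt_of_tendsto' (a := x)
    (fun t _ => Gf_hasDeriv t) (int_Gf.neg.integrableOn) htendF
  have hGint : ∫ t in Ioi x, Gf t = x * Real.exp (-x^2) / (2*x^2+1) := by
    have : ∫ t in Ioi x, -Gf t = - ∫ t in Ioi x, Gf t := integral_neg _
    rw [this] at key; linarith [key]
  rw [← hGint]
  apply setIntegral_mono_on int_Gf.integrableOn int_gauss.integrableOn measurableSet_Ioi
  intro t _
  calc Gf t ≤ |Gf t| := le_abs_self _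
    _ ≤ Real.exp (-t^2) := Gf_abs_le t

lemma gauss_Ioi_eq (r : ℝ) :
    ∫ t in Ioi r, Real.exp (-t^2) =
      (∫ t : ℝ, Real.exp (-t^2)) - (∫ t in Iic (0:ℝ), Real.exp (-t^2))
        - ∫ t in (0:ℝ)..r, Real.exp (-t^2) := by
  have h1 : ∫ t in (0:ℝ)..r, Real.exp (-t^2)
      = (∫ t in Iic r, Real.exp (-t^2)) - ∫ t in Iic (0:ℝ), Real.exp (-t^2) :=
    (intervalIntegral.integral_Iic_sub_Iic int_gauss.integrableOn int_gauss.integrableOn).symm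
  have h2 : (∫ t in Iic r, Real.exp (-t^2)) + ∫ t in Ioi r, Real.exp (-t^2)
      = ∫ t : ℝ, Real.exp (-t^2) :=
    intervalIntegral.integral_Iic_add_Ioi int_gauss.integrableOn int_gauss.integrableOn
  rw [h1]; linarith

lemma hasDeriv_gauss_Ioi (r : ℝ) :
    HasDerivAt (fun r : ℝ => ∫ t in Ioi r, Real.exp (-t^2)) (-Real.exp (-r^2)) r := by
  have h : HasDerivAt (fun r : ℝ => ∫ t in (0:ℝ)..r, Real.exp (-t^2)) (Real.exp (-r^2)) r := by
    exact intervalIntegral.integral_hasDerivAt_right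
      ((Continuous.intervalIntegrable (by continuity) _ _))
      ((Continuous.stronglyMeasurableAtFilter (by continuity) _ _))
      (Continuous.continuousAt (by continuity))
  have h2 : HasDerivAt (fun y : ℝ => ((∫ t : ℝ, Real.exp (-t^2)) -
      (∫ t in Iic (0:ℝ), Real.exp (-t^2))) - ∫ t in (0:ℝ)..y, Real.exp (-t^2))
      (-Real.exp (-r^2)) r := by
    simpa using ((hasDerivAt_const r ((∫ t : ℝ, Real.exp (-t^2)) -
      (∫ t in Iic (0:ℝ), Real.exp (-t^2)))).fun_sub h)
  exact h2.congr_of_eventuallyEq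
    (Filter.Eventually.of_forall fun y => gauss_Ioi_eq y)

lemma erfc_hasDeriv (r : ℝ) :
    HasDerivAt erfc (-(2 / Real.sqrt π) * Real.exp (-r^2)) r := by
  have h := (hasDeriv_gauss_Ioi r).const_mul (2 / Real.sqrt π)
  have he : erfc = fun r => (2 / Real.sqrt π) * ∫ t in Ioi r, Real.exp (-t^2) := by
    funext y; simp [erfc]
  rw [he]
  refine h.congr_deriv ?_; ring

lemma sqrt_pi_pos : 0 < Real.sqrt π := Real.sqrt_pos.mpr Real.pi_pos

lemma vReg_hasDeriv {β : ℝ} (hβ : 0 < β) (r : ℝ) :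
    HasDerivAt (vReg β) (r / (2 * β^2) * vReg β r - 1 / (2 * β^2)) r := by
  have hβ' : β ≠ 0 := ne_of_gt hβ
  have hπ : Real.sqrt π ≠ 0 := ne_of_gt sqrt_pi_pos
  have h1 : HasDerivAt (fun r : ℝ => r^2 / (4 * β^2)) (r / (2 * β^2)) r := by
    have h0 := (hasDerivAt_pow 2 r).div_const (4 * β^2)
    norm_num at h0
    have he : 2 * r / (4 * β^2) = r / (2 * β^2) := by
      rw [div_eq_div_iff (by positivity) (by positivity)]; ring
    rwa [he] at h0
  have h3 : HasDerivAt (fun r : ℝ => r / (2 * β)) (1 / (2 * β)) r := by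
    simpa using (hasDerivAt_id r).div_const (2 * β)
  have h4 : HasDerivAt (fun r : ℝ => erfc (r / (2 * β)))
      (-(2 / Real.sqrt π) * Real.exp (-(r / (2*β))^2) * (1 / (2 * β))) r :=
    HasDerivAt.comp (h₂ := erfc) r (erfc_hasDeriv (r / (2 * β))) h3
  have h5 := ((h1.exp.const_mul (Real.sqrt π / (2 * β))).mul h4)
  have hx2 : -(r / (2*β))^2 = -(r^2 / (4 * β^2)) := by
    have h4β : (2*β)^2 = 4*β^2 := by ring
    rw [div_pow, h4β]
  have heq : Real.sqrt π / (2 * β) * (Real.exp (r ^ 2 / (4 * β ^ 2)) * (r / (2 * β ^ 2))) *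
        erfc (r / (2 * β)) +
      Real.sqrt π / (2 * β) * Real.exp (r ^ 2 / (4 * β ^ 2)) *
        (-(2 / Real.sqrt π) * Real.exp (-(r / (2 * β)) ^ 2) * (1 / (2 * β)))
      = r / (2 * β^2) * vReg β r - 1 / (2 * β^2) := by
    unfold vReg
    rw [hx2, Real.exp_neg]
    field_simp
    ring
  exact heq ▸ h5

theorem vReg_first_moment_bound (β γ : ℝ) (hβ : 0 < β) (hγ : 0 < γ) :
    -γ * deriv (vReg β) γ + vReg β γ ≤ 4 / γ := by
  have hβ' : β ≠ 0 := ne_of_gt hβ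
  have hder : deriv (vReg β) γ = γ / (2 * β^2) * vReg β γ - 1 / (2 * β^2) :=
    (vReg_hasDeriv hβ γ).deriv
  set x := γ / (2 * β) with hxdef
  have hx : 0 < x := by positivity
  set I := ∫ t in Ioi x, Real.exp (-t^2) with hIdef
  have hv : vReg β γ = Real.exp (x^2) * I / β := by
    unfold vReg erfc
    have hπ : Real.sqrt π ≠ 0 := ne_of_gt sqrt_pi_pos
    have hx2 : γ^2 / (4 * β^2) = x^2 := by rw [hxdef]; field_simp; ring
    rw [hx2, ← hxdef, ← hIdef]
    field_simp
  have hexp : Real.exp (x^2) * Real.exp (-x^2) = 1 := by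
    rw [← Real.exp_add]; simp
  have hupper : I ≤ Real.exp (-x^2) / (2 * x) := gauss_Ioi_upper hx
  have hlower : x * Real.exp (-x^2) / (2*x^2+1) ≤ I := gauss_Ioi_lower x
  set u := Real.exp (x^2) * I with hudef
  have hEpos : (0:ℝ) < Real.exp (x^2) := Real.exp_pos _
  have hu1 : u ≤ 1 / (2 * x) := by
    calc u ≤ Real.exp (x^2) * (Real.exp (-x^2) / (2 * x)) := by
          exact mul_le_mul_of_nonneg_left hupper (le_of_lt hEpos)
      _ = 1 / (2 * x) := by rw [mul_div_assoc'] at *; rw [hexp]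
  have hu2 : x / (2*x^2+1) ≤ u := by
    calc x / (2*x^2+1) = Real.exp (x^2) * (x * Real.exp (-x^2) / (2*x^2+1)) := by
          field_simp
          nlinarith [hexp]
      _ ≤ u := mul_le_mul_of_nonneg_left hlower (le_of_lt hEpos)
  have hγx : γ = 2 * β * x := by rw [hxdef]; field_simp
  rw [hder, hv]
  have hu1' : u * (2 * x) ≤ 1 := (le_div_iff₀ (by positivity)).mp hu1
  have hu2' : x ≤ u * (2*x^2+1) := (div_le_iff₀ (by positivity)).mp hu2
  have hgoal : x * (u * (1 - 2*x^2)) + x^2 ≤ 2 := by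
    rcases le_or_gt (2*x^2) 1 with h | h
    · nlinarith [mul_nonneg (by linarith : (0:ℝ) ≤ 1 - 2*x^2)
        (by linarith : (0:ℝ) ≤ 1 - u * (2*x)), sq_nonneg x]
    · nlinarith [mul_nonneg hx.le (mul_nonneg (by linarith : (0:ℝ) ≤ 2*x^2 - 1)
        (by linarith : (0:ℝ) ≤ u * (2*x^2+1) - x)), sq_nonneg x, hx.le]
  rw [hγx, le_div_iff₀ (by positivity : (0:ℝ) < 2*β*x)]
  have hβ2 : (0:ℝ) < β^2 := by positivity
  have expand : (-(2*β*x) * ((2*β*x) / (2 * β^2) * (u / β) - 1 / (2 * β^2)) + u / β) * (2*β*x)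
      = 2 * (x * (u * (1 - 2*x^2)) + x^2) := by
    field_simp
    ring
  rw [expand]
  linarith [hgoal]
end

section
/- For the regularized Coulomb potential v_β with β > 0 and any γ > 0, ∫_0^γ v_β''(r) r² dr ≤ 2 ∫_0^γ v_β(r) dr ≤ 4 ln(1 + √π·γ/(4β)). -/
open Real MeasureTheory Set Filter Topology

noncomputable def tailI (x : ℝ) : ℝ := ∫ t in Set.Ioi x, Real.exp (-t ^ 2)

lemma integrable_expsq : Integrable (fun t : ℝ => Real.exp (-t ^ 2)) := by
  simpa [neg_mul, one_mul] using integrable_exp_neg_mul_sq (one_pos)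

lemma tailI_zero : tailI 0 = Real.sqrt π / 2 := by
  simpa [tailI, neg_mul, one_mul] using integral_gaussian_Ioi 1

lemma tailI_nonneg (x : ℝ) : 0 ≤ tailI x :=
  setIntegral_nonneg measurableSet_Ioi (fun t _ => (Real.exp_pos _).le)

lemma tailI_eq (x : ℝ) : tailI x = tailI 0 - ∫ t in (0:ℝ)..x, Real.exp (-t ^ 2) := by
  rcases le_total 0 x with hx | hx
  · have hu : Set.Ioc 0 x ∪ Set.Ioi x = Set.Ioi 0 := by
      rw [Set.Ioc_union_Ioi' le_rfl, min_eq_left hx]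
    have := setIntegral_union (f := fun t : ℝ => Real.exp (-t ^ 2)) (μ := volume)
      (s := Set.Ioc 0 x) (t := Set.Ioi x)
      (Set.Ioc_disjoint_Ioi le_rfl) measurableSet_Ioi
      integrable_expsq.integrableOn integrable_expsq.integrableOn
    rw [hu] at this
    rw [intervalIntegral.integral_of_le hx]
    unfold tailI
    linarith [this]
  · have hu : Set.Ioc x 0 ∪ Set.Ioi 0 = Set.Ioi x := by
      rw [Set.Ioc_union_Ioi' le_rfl, min_eq_left hx]
    have := setIntegral_union (f := fun t : ℝ => Real.exp (-t ^ 2)) (μ := volume)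
      (s := Set.Ioc x 0) (t := Set.Ioi 0)
      (Set.Ioc_disjoint_Ioi le_rfl) measurableSet_Ioi
      integrable_expsq.integrableOn integrable_expsq.integrableOn
    rw [hu] at this
    rw [intervalIntegral.integral_symm, intervalIntegral.integral_of_le hx]
    unfold tailI
    linarith [this]

lemma hasDerivAt_tailI (x : ℝ) : HasDerivAt tailI (-Real.exp (-x ^ 2)) x := by
  have hc : Continuous fun t : ℝ => Real.exp (-t ^ 2) := by continuity
  have h1 : HasDerivAt (fun u => ∫ t in (0:ℝ)..u, Real.exp (-t ^ 2)) (Real.exp (-x ^ 2)) x :=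
    intervalIntegral.integral_hasDerivAt_right (hc.intervalIntegrable _ _)
      (hc.stronglyMeasurableAtFilter _ _) hc.continuousAt
  have : tailI = fun u => tailI 0 - ∫ t in (0:ℝ)..u, Real.exp (-t ^ 2) := funext tailI_eq
  rw [this]
  simpa using h1.const_sub (tailI 0)

lemma continuous_tailI : Continuous tailI :=
  continuous_iff_continuousAt.2 fun x => (hasDerivAt_tailI x).continuousAt

lemma integrable_mul_expsq : Integrable (fun t : ℝ => t * Real.exp (-t ^ 2)) := by
  have := integrable_rpow_mul_exp_neg_mul_sq (b := 1) one_pos (s := 1) (by norm_num)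
  simpa [neg_mul, one_mul, Real.rpow_one] using this

lemma integral_mul_expsq_Ioi (x : ℝ) :
    ∫ t in Set.Ioi x, t * Real.exp (-t ^ 2) = Real.exp (-x ^ 2) / 2 := by
  have h : ∀ t ∈ Set.Ici x, HasDerivAt (fun t : ℝ => -Real.exp (-t ^ 2) / 2)
      (t * Real.exp (-t ^ 2)) t := by
    intro t _
    have h1 : HasDerivAt (fun t : ℝ => -t ^ 2) (-(2 * t)) t := by
      simpa using ((hasDerivAt_pow 2 t).fun_neg)
    have := (h1.exp.neg).div_const 2
    convert this using 1 <;> try rfl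
    ring
  have htend : Tendsto (fun t : ℝ => -Real.exp (-t ^ 2) / 2) atTop (𝓝 0) := by
    have h2 : Tendsto (fun t : ℝ => -t ^ 2) atTop atBot :=
      tendsto_neg_atTop_atBot.comp (tendsto_pow_atTop two_ne_zero)
    have := ((Real.tendsto_exp_atBot.comp h2).neg).div_const 2
    simpa using this
  have := integral_Ioi_of_hasDerivAt_of_tendsto' h integrable_mul_expsq.integrableOn htend
  rw [this]; ring



lemma tailI_le (x : ℝ) (hx : 0 < x) : tailI x ≤ Real.exp (-x ^ 2) / (2 * x) := by
  have h1 : tailI x ≤ ∫ t in Set.Ioi x, (1/x) * (t * Real.exp (-t ^ 2)) := by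
    apply setIntegral_mono_on integrable_expsq.integrableOn
    · exact (integrable_mul_expsq.const_mul (1/x)).integrableOn
    · exact measurableSet_Ioi
    · intro t ht
      rw [one_div, ← div_eq_inv_mul, le_div_iff₀ hx]
      nlinarith [Real.exp_pos (-t^2), ht.out]
  calc tailI x ≤ _ := h1
    _ = Real.exp (-x ^ 2) / (2 * x) := by
        rw [MeasureTheory.integral_const_mul, integral_mul_expsq_Ioi]; field_simp


lemma tailI_tendsto : Tendsto tailI atTop (𝓝 0) := by
  have hupper : Tendsto (fun y : ℝ => Real.exp (-y ^ 2) / 2) atTop (𝓝 0) := by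
    have h2 : Tendsto (fun t : ℝ => -t ^ 2) atTop atBot :=
      tendsto_neg_atTop_atBot.comp (tendsto_pow_atTop two_ne_zero)
    simpa using (Real.tendsto_exp_atBot.comp h2).div_const 2
  apply tendsto_of_tendsto_of_tendsto_of_le_of_le' tendsto_const_nhds hupper
  · exact Filter.Eventually.of_forall tailI_nonneg
  · filter_upwards [Filter.eventually_ge_atTop 1] with y hy
    calc tailI y ≤ Real.exp (-y ^ 2) / (2 * y) := tailI_le y (by linarith)
      _ ≤ Real.exp (-y ^ 2) / 2 := by
          apply div_le_div_of_nonneg_left (Real.exp_pos _).le two_pos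
          linarith

noncomputable def hAux (x : ℝ) : ℝ := Real.sqrt π * Real.exp (-x ^ 2) / (Real.sqrt π * x + 2) - tailI x

lemma hasDerivAt_hAux (x : ℝ) (hx : 0 ≤ x) :
    HasDerivAt hAux (Real.exp (-x ^ 2) * ((4 - π) - π * x ^ 2) / (Real.sqrt π * x + 2) ^ 2) x := by
  have hd : (0:ℝ) < Real.sqrt π * x + 2 := by
    have := Real.sqrt_nonneg π
    nlinarith
  have h1 : HasDerivAt (fun t : ℝ => -t ^ 2) (-(2 * x)) x := by
    simpa using ((hasDerivAt_pow 2 x).fun_neg)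
  have hnum : HasDerivAt (fun t : ℝ => Real.sqrt π * Real.exp (-t ^ 2))
      (Real.sqrt π * (Real.exp (-x ^ 2) * -(2 * x))) x := (h1.exp).const_mul _
  have hden : HasDerivAt (fun t : ℝ => Real.sqrt π * t + 2) (Real.sqrt π) x := by
    simpa using ((hasDerivAt_id x).const_mul (Real.sqrt π)).add_const 2
  have hq := hnum.div hden hd.ne'
  have h2 := hq.sub (hasDerivAt_tailI x)
  convert h2 using 1 <;> try rfl
  field_simp
  ring_nf
  rw [Real.sq_sqrt pi_pos.le]
  ring

lemma hAux_zero : hAux 0 = 0 := by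
  simp [hAux, tailI_zero]

lemma hAux_tendsto : Tendsto hAux atTop (𝓝 0) := by
  have h1 : Tendsto (fun x : ℝ => Real.sqrt π * Real.exp (-x ^ 2)) atTop (𝓝 0) := by
    have h2 : Tendsto (fun t : ℝ => -t ^ 2) atTop atBot :=
      tendsto_neg_atTop_atBot.comp (tendsto_pow_atTop two_ne_zero)
    simpa using (Real.tendsto_exp_atBot.comp h2).const_mul (Real.sqrt π)
  have hden : Tendsto (fun x : ℝ => Real.sqrt π * x + 2) atTop atTop := by
    apply Filter.tendsto_atTop_add_const_right
    exact (tendsto_id.const_mul_atTop (Real.sqrt_pos.2 pi_pos))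
  have := (h1.div_atTop hden).sub tailI_tendsto
  simp only [sub_zero] at this; exact this

lemma hAux_nonneg (x : ℝ) (hx : 0 ≤ x) : 0 ≤ hAux x := by
  set x₀ : ℝ := Real.sqrt ((4 - π) / π) with hx₀def
  have h4 : π ≤ 4 := by linarith [Real.pi_le_four]
  have hx₀nn : 0 ≤ x₀ := Real.sqrt_nonneg _
  have hx₀sq : x₀ ^ 2 = (4 - π) / π := Real.sq_sqrt (div_nonneg (by linarith) pi_pos.le)
  have hcont : ContinuousOn hAux (Set.Ici 0) := fun y hy =>
    ((hasDerivAt_hAux y hy).continuousAt).continuousWithinAt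
  rcases le_total x x₀ with hle | hle
  · -- monotone on [0, x₀]
    have hmono : MonotoneOn hAux (Set.Icc 0 x₀) := by
      apply monotoneOn_of_deriv_nonneg (convex_Icc 0 x₀)
        (hcont.mono (Set.Icc_subset_Ici_self))
      · intro y hy
        rw [interior_Icc] at hy
        exact ((hasDerivAt_hAux y hy.1.le).differentiableAt).differentiableWithinAt
      · intro y hy
        rw [interior_Icc] at hy
        rw [(hasDerivAt_hAux y hy.1.le).deriv]
        apply div_nonneg _ (sq_nonneg _)
        apply mul_nonneg (Real.exp_pos _).le
        have hy2 : y ^ 2 < (4 - π) / π := by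
          rw [← hx₀sq]
          exact pow_lt_pow_left₀ hy.2 hy.1.le two_ne_zero
        rw [lt_div_iff₀ pi_pos] at hy2
        nlinarith [pi_pos]
    have := hmono (Set.left_mem_Icc.2 hx₀nn) ⟨hx, hle⟩ hx
    rwa [hAux_zero] at this
  · -- antitone on [x₀, ∞)
    have hanti : AntitoneOn hAux (Set.Ici x₀) := by
      apply antitoneOn_of_deriv_nonpos (convex_Ici x₀)
        (hcont.mono (Set.Ici_subset_Ici.2 hx₀nn))
      · intro y hy
        rw [interior_Ici] at hy
        exact ((hasDerivAt_hAux y (hx₀nn.trans hy.out.le)).differentiableAt).differentiableWithinAt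
      · intro y hy
        rw [interior_Ici] at hy
        rw [(hasDerivAt_hAux y (hx₀nn.trans hy.out.le)).deriv]
        apply div_nonpos_of_nonpos_of_nonneg _ (sq_nonneg _)
        apply mul_nonpos_of_nonneg_of_nonpos (Real.exp_pos _).le
        have hy2 : (4 - π) / π < y ^ 2 := by
          rw [← hx₀sq]
          exact pow_lt_pow_left₀ hy.out hx₀nn two_ne_zero
        rw [div_lt_iff₀ pi_pos] at hy2
        nlinarith [pi_pos]
    apply le_of_tendsto hAux_tendsto
    filter_upwards [Filter.eventually_ge_atTop x] with y hy
    exact hanti (Set.mem_Ici.2 hle) (Set.mem_Ici.2 (hle.trans hy)) hy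

lemma tailI_key (x : ℝ) (hx : 0 ≤ x) :
    tailI x ≤ Real.sqrt π * Real.exp (-x ^ 2) / (Real.sqrt π * x + 2) := by
  have := hAux_nonneg x hx
  unfold hAux at this
  linarith

lemma erfc_eq : erfc = fun r => (2 / Real.sqrt π) * tailI r := rfl

lemma hasDerivAt_erfc (r : ℝ) :
    HasDerivAt erfc (-(2 / Real.sqrt π * Real.exp (-r ^ 2))) r := by
  rw [erfc_eq]
  simpa [mul_comm, mul_neg] using (hasDerivAt_tailI r).const_mul (2 / Real.sqrt π)

lemma erfc_nonneg (r : ℝ) : 0 ≤ erfc r :=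
  mul_nonneg (by positivity) (tailI_nonneg r)

lemma hasDerivAt_vReg (β : ℝ) (hβ : 0 < β) (r : ℝ) :
    HasDerivAt (vReg β) ((r * vReg β r - 1) / (2 * β ^ 2)) r := by
  have hsπ : (0:ℝ) < Real.sqrt π := Real.sqrt_pos.2 pi_pos
  have h1 : HasDerivAt (fun r : ℝ => r ^ 2 / (4 * β ^ 2)) (2 * r / (4 * β ^ 2)) r := by
    simpa using (hasDerivAt_pow 2 r).div_const (4 * β ^ 2)
  have h2 := h1.exp
  have h3 : HasDerivAt (fun r : ℝ => r / (2 * β)) (1 / (2 * β)) r := by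
    simpa using (hasDerivAt_id r).div_const (2 * β)
  have h4 : HasDerivAt (fun r : ℝ => erfc (r / (2 * β)))
      (-(2 / Real.sqrt π * Real.exp (-(r / (2 * β)) ^ 2)) * (1 / (2 * β))) r :=
    (hasDerivAt_erfc (r / (2 * β))).comp (h₂ := erfc) r h3
  have h5 := (h2.mul h4).const_mul (Real.sqrt π / (2 * β))
  have h6 : vReg β = fun r => (Real.sqrt π / (2 * β)) *
      (Real.exp (r ^ 2 / (4 * β ^ 2)) * erfc (r / (2 * β))) := by
    funext r; simp only [vReg]; ring
  rw [h6]
  convert h5 using 1 <;> try rfl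
  have hexp : Real.exp (r ^ 2 / (4 * β ^ 2)) * Real.exp (-(r / (2 * β)) ^ 2) = 1 := by
    rw [← Real.exp_add]
    rw [show r ^ 2 / (4 * β ^ 2) + -(r / (2 * β)) ^ 2 = 0 by field_simp; ring]
    exact Real.exp_zero
  simp only [vReg]
  generalize hE : Real.exp (r ^ 2 / (4 * β ^ 2)) = E at hexp ⊢
  generalize hX : Real.exp (-(r / (2 * β)) ^ 2) = X at hexp ⊢
  have hEpos : 0 < E := hE ▸ Real.exp_pos _
  rw [← inv_eq_of_mul_eq_one_right hexp]
  field_simp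
  ring

lemma continuous_vReg (β : ℝ) (hβ : 0 < β) : Continuous (vReg β) :=
  continuous_iff_continuousAt.2 fun r => (hasDerivAt_vReg β hβ r).continuousAt

lemma deriv_vReg (β : ℝ) (hβ : 0 < β) :
    deriv (vReg β) = fun r => (r * vReg β r - 1) / (2 * β ^ 2) :=
  funext fun r => (hasDerivAt_vReg β hβ r).deriv

lemma hasDerivAt_v1 (β : ℝ) (hβ : 0 < β) (r : ℝ) :
    HasDerivAt (fun r => (r * vReg β r - 1) / (2 * β ^ 2))
      ((vReg β r + r * ((r * vReg β r - 1) / (2 * β ^ 2))) / (2 * β ^ 2)) r := by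
  have h := (((hasDerivAt_id r).mul (hasDerivAt_vReg β hβ r)).sub_const 1).div_const (2 * β ^ 2)
  convert h using 1 <;> try rfl
  simp only [id_eq]
  ring

lemma deriv_deriv_vReg (β : ℝ) (hβ : 0 < β) :
    deriv (deriv (vReg β)) =
      fun r => (vReg β r + r * ((r * vReg β r - 1) / (2 * β ^ 2))) / (2 * β ^ 2) := by
  rw [deriv_vReg β hβ]
  exact funext fun r => (hasDerivAt_v1 β hβ r).deriv

lemma vReg_nonneg (β : ℝ) (hβ : 0 < β) (r : ℝ) : 0 ≤ vReg β r := by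
  apply mul_nonneg (mul_nonneg _ (Real.exp_pos _).le) (erfc_nonneg _)
  positivity

lemma mul_vReg_le_one (β : ℝ) (hβ : 0 < β) (γ : ℝ) (hγ : 0 < γ) : γ * vReg β γ ≤ 1 := by
  have hsπ : (0:ℝ) < Real.sqrt π := Real.sqrt_pos.2 pi_pos
  have hx : 0 < γ / (2 * β) := by positivity
  have ht := tailI_le _ hx
  have hexp : Real.exp (γ ^ 2 / (4 * β ^ 2)) * Real.exp (-(γ / (2 * β)) ^ 2) = 1 := by
    rw [← Real.exp_add]
    rw [show γ ^ 2 / (4 * β ^ 2) + -(γ / (2 * β)) ^ 2 = 0 by field_simp; ring]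
    exact Real.exp_zero
  have h1 : γ * vReg β γ = (γ / β) * (Real.exp (γ ^ 2 / (4 * β ^ 2)) * tailI (γ / (2 * β))) := by
    simp only [vReg, erfc_eq]
    field_simp
  rw [h1]
  have h2 : (γ / β) * (Real.exp (γ ^ 2 / (4 * β ^ 2)) * tailI (γ / (2 * β)))
      ≤ (γ / β) * (Real.exp (γ ^ 2 / (4 * β ^ 2)) *
        (Real.exp (-(γ / (2 * β)) ^ 2) / (2 * (γ / (2 * β))))) := by
    gcongr
  calc _ ≤ _ := h2
    _ = 1 := by
        rw [show Real.exp (γ ^ 2 / (4 * β ^ 2)) *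
            (Real.exp (-(γ / (2 * β)) ^ 2) / (2 * (γ / (2 * β)))) =
            (Real.exp (γ ^ 2 / (4 * β ^ 2)) * Real.exp (-(γ / (2 * β)) ^ 2))
              / (2 * (γ / (2 * β))) from by ring, hexp]
        field_simp

lemma vReg_le (β : ℝ) (hβ : 0 < β) (r : ℝ) (hr : 0 ≤ r) :
    vReg β r ≤ 2 / (r + 4 * β / Real.sqrt π) := by
  have hsπ : (0:ℝ) < Real.sqrt π := Real.sqrt_pos.2 pi_pos
  have hx : 0 ≤ r / (2 * β) := by positivity
  have ht := tailI_key _ hx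
  have hexp : Real.exp (r ^ 2 / (4 * β ^ 2)) * Real.exp (-(r / (2 * β)) ^ 2) = 1 := by
    rw [← Real.exp_add]
    rw [show r ^ 2 / (4 * β ^ 2) + -(r / (2 * β)) ^ 2 = 0 by field_simp; ring]
    exact Real.exp_zero
  have h1 : vReg β r = (1 / β) * (Real.exp (r ^ 2 / (4 * β ^ 2)) * tailI (r / (2 * β))) := by
    simp only [vReg, erfc_eq]
    field_simp
  have hd : (0:ℝ) < Real.sqrt π * (r / (2 * β)) + 2 := by positivity
  have h2 : vReg β r ≤ (1 / β) * (Real.exp (r ^ 2 / (4 * β ^ 2)) *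
      (Real.sqrt π * Real.exp (-(r / (2 * β)) ^ 2) / (Real.sqrt π * (r / (2 * β)) + 2))) := by
    rw [h1]
    gcongr
  calc vReg β r ≤ _ := h2
    _ = 2 / (r + 4 * β / Real.sqrt π) := by
        rw [show Real.exp (r ^ 2 / (4 * β ^ 2)) *
            (Real.sqrt π * Real.exp (-(r / (2 * β)) ^ 2) / (Real.sqrt π * (r / (2 * β)) + 2)) =
            Real.sqrt π * (Real.exp (r ^ 2 / (4 * β ^ 2)) * Real.exp (-(r / (2 * β)) ^ 2))
              / (Real.sqrt π * (r / (2 * β)) + 2) from by ring, hexp]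
        rw [eq_div_iff (by positivity)]
        field_simp
        ring

theorem vReg_second_moment_bound (β γ : ℝ) (hβ : 0 < β) (hγ : 0 < γ) :
    (∫ r in (0:ℝ)..γ, deriv (deriv (vReg β)) r * r ^ 2) ≤
      2 * ∫ r in (0:ℝ)..γ, vReg β r ∧
    2 * (∫ r in (0:ℝ)..γ, vReg β r) ≤
      4 * Real.log (1 + Real.sqrt π * γ / (4 * β)) := by
  have hsπ : (0:ℝ) < Real.sqrt π := Real.sqrt_pos.2 pi_pos
  have hcontv := continuous_vReg β hβ
  constructor
  · set v2 : ℝ → ℝ :=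
      fun r => (vReg β r + r * ((r * vReg β r - 1) / (2 * β ^ 2))) / (2 * β ^ 2) with hv2
    have hcontv2 : Continuous v2 := by
      apply Continuous.div_const
      exact hcontv.add (continuous_id.mul
        (((continuous_id.mul hcontv).sub continuous_const).div_const _))
    rw [deriv_deriv_vReg β hβ]
    have hG : ∀ r ∈ Set.uIcc (0:ℝ) γ, HasDerivAt
        (fun r => (r * vReg β r - 1) / (2 * β ^ 2) * r ^ 2 - 2 * vReg β r * r)
        (v2 r * r ^ 2 - 2 * vReg β r) r := by
      intro r _
      have h1 := (hasDerivAt_v1 β hβ r).mul (hasDerivAt_pow 2 r)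
      have h2 := ((hasDerivAt_vReg β hβ r).const_mul 2).mul (hasDerivAt_id r)
      convert h1.sub h2 using 1 <;> try rfl
      simp only [id_eq, hv2]
      ring
    have hf2 : IntervalIntegrable (fun r => v2 r * r ^ 2) volume 0 γ :=
      (hcontv2.mul (continuous_pow 2)).intervalIntegrable 0 γ
    have hfv : IntervalIntegrable (fun r => 2 * vReg β r) volume 0 γ :=
      (continuous_const.mul hcontv).intervalIntegrable 0 γ
    have hFTC := intervalIntegral.integral_eq_sub_of_hasDerivAt hG (hf2.sub hfv)
    rw [intervalIntegral.integral_sub hf2 hfv] at hFTC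
    have e2 : ∫ r in (0:ℝ)..γ, 2 * vReg β r = 2 * ∫ r in (0:ℝ)..γ, vReg β r :=
      intervalIntegral.integral_const_mul 2 _
    rw [e2] at hFTC
    simp only [ne_eq, OfNat.ofNat_ne_zero, not_false_eq_true, zero_pow, mul_zero, zero_mul,
      mul_zero, sub_zero, zero_sub, mul_zero] at hFTC
    have hneg : (γ * vReg β γ - 1) / (2 * β ^ 2) ≤ 0 :=
      div_nonpos_of_nonpos_of_nonneg
        (by linarith [mul_vReg_le_one β hβ γ hγ]) (by positivity)
    have hterm : (γ * vReg β γ - 1) / (2 * β ^ 2) * γ ^ 2 - 2 * vReg β γ * γ ≤ 0 := by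
      have h3 : (γ * vReg β γ - 1) / (2 * β ^ 2) * γ ^ 2 ≤ 0 :=
        mul_nonpos_of_nonpos_of_nonneg hneg (sq_nonneg γ)
      nlinarith [vReg_nonneg β hβ γ, hγ]
    linarith [hFTC]
  · set a : ℝ := 4 * β / Real.sqrt π with ha_def
    have ha : 0 < a := by positivity
    have hmono : (∫ r in (0:ℝ)..γ, vReg β r) ≤ ∫ r in (0:ℝ)..γ, 2 / (r + a) := by
      apply intervalIntegral.integral_mono_on hγ.le (hcontv.intervalIntegrable 0 γ)
      · apply ContinuousOn.intervalIntegrable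
        rw [Set.uIcc_of_le hγ.le]
        apply ContinuousOn.div continuousOn_const
          ((continuous_id.add continuous_const).continuousOn)
        intro r hr
        have : 0 < r + a := by have := hr.1; positivity
        exact this.ne'
      · intro r hr
        exact vReg_le β hβ r hr.1
    have hF : ∀ r ∈ Set.uIcc (0:ℝ) γ, HasDerivAt (fun r => 2 * Real.log (r + a))
        (2 / (r + a)) r := by
      intro r hr
      rw [Set.uIcc_of_le hγ.le] at hr
      have hpos : 0 < r + a := by have := hr.1; positivity
      have := ((Real.hasDerivAt_log hpos.ne').comp r ((hasDerivAt_id r).add_const a)).const_mul 2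
      convert this using 1 <;> try rfl
      field_simp
    have hIntF : IntervalIntegrable (fun r => 2 / (r + a)) volume 0 γ := by
      apply ContinuousOn.intervalIntegrable
      rw [Set.uIcc_of_le hγ.le]
      apply ContinuousOn.div continuousOn_const
        ((continuous_id.add continuous_const).continuousOn)
      intro r hr
      have : 0 < r + a := by have := hr.1; positivity
      exact this.ne'
    have hcalc : ∫ r in (0:ℝ)..γ, 2 / (r + a)
        = 2 * Real.log (1 + Real.sqrt π * γ / (4 * β)) := by
      rw [intervalIntegral.integral_eq_sub_of_hasDerivAt hF hIntF]
      have hra : (γ + a) / a = 1 + Real.sqrt π * γ / (4 * β) := by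
        rw [ha_def]
        field_simp
        ring
      rw [zero_add, ← mul_sub, ← Real.log_div (by positivity) ha.ne', hra]
    linarith [hmono, hcalc]
end
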